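/- For every real x ≥ 1, the number N₋(x) of positive integers n ≤ x with μ(n) = −1 satisfies N₋(x) = −M(√x) + (1/2)·Σ_{i,j=1}^{⌊√x⌋} μ(i)·μ(j)·⌊x/(i·j)⌋ + (1/2)·Σ_{i=1}^{⌊√x⌋} μ(i)·⌊x/i²⌋. -/

import Mathlib

open ArithmeticFunction Finset

noncomputable def Mertens (x : ℝ) : ℤ := ∑ k ∈ Finset.Icc 1 ⌊x⌋₊, moebius k

noncomputable def Nplus (x : ℝ) : ℕ := ((Finset.Icc 1 ⌊x⌋₊).filter (fun n => moebius n = 1)).card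

noncomputable def Nminus (x : ℝ) : ℕ := ((Finset.Icc 1 ⌊x⌋₊).filter (fun n => moebius n = -1)).card

noncomputable def Nzero (x : ℝ) : ℕ := ((Finset.Icc 1 ⌊x⌋₊).filter (fun n => moebius n = 0)).card

noncomputable def Qsf (x : ℝ) : ℕ := ((Finset.Icc 1 ⌊x⌋₊).filter (fun n => moebius n ≠ 0)).card

/-! With `N = ⌊x⌋` and `s = ⌊√x⌋ = Nat.sqrt N`, each sum is evaluated separately.
Möbius inversion gives `∑_{b ≤ N} μ(b) ⌊N/(ab)⌋ = 1` for every `a ≤ N`, and `⌊N/(ab)⌋ = 0` once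
both `a, b > s`; splitting `[1, N]²` along `s` (the hyperbola method) therefore turns the double sum
into `2 M(s) - M(N)`. The integers `d` with `d² ∣ n` are the divisors of `Nat.floorRoot 2 n`, which
is `1` exactly when `n` is squarefree, so `∑_{d ≤ s} μ(d) ⌊N/d²⌋` counts the squarefree `n ≤ N`.
Since `μ(n) = ±1` on squarefree `n`, this count minus `M(N)` is `2 N₋(x)`. -/

open scoped ArithmeticFunction.Moebius

theorem sum_sum_eq_two_nsmul_sub_of_symm {α M : Type*} [DecidableEq α] [AddCommGroup M]
    {s t : Finset α} (hst : s ⊆ t) {f : α → α → M} (hf : ∀ a b, f a b = f b a)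
    (h0 : ∀ a ∈ t \ s, ∀ b ∈ t \ s, f a b = 0) :
    ∑ a ∈ s, ∑ b ∈ s, f a b = 2 • ∑ a ∈ s, ∑ b ∈ t, f a b - ∑ a ∈ t, ∑ b ∈ t, f a b := by
  have hsplit : ∀ a, ∑ b ∈ t, f a b = ∑ b ∈ t \ s, f a b + ∑ b ∈ s, f a b := fun a =>
    (sum_sdiff hst).symm
  have hcross : ∑ a ∈ t \ s, ∑ b ∈ s, f a b = ∑ a ∈ s, ∑ b ∈ t \ s, f a b := by
    rw [sum_comm]
    exact sum_congr rfl fun a _ => sum_congr rfl fun b _ => hf b a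
  have hzero : ∑ a ∈ t \ s, ∑ b ∈ t \ s, f a b = 0 :=
    sum_eq_zero fun a ha => sum_eq_zero fun b hb => h0 a ha b hb
  rw [← sum_sdiff hst]
  simp only [hsplit, sum_add_distrib, hcross, hzero]
  abel

theorem sum_mul_div_eq_sum_sum_filter_dvd {R : Type*} [Semiring R] (s : Finset ℕ) (f : ℕ → R)
    (g : ℕ → ℕ) (N : ℕ) :
    ∑ d ∈ s, f d * ((N / g d : ℕ) : R) = ∑ n ∈ Ioc 0 N, ∑ d ∈ s with g d ∣ n, f d := by
  simp_rw [← Nat.Ioc_filter_dvd_card_eq_div, card_filter, Nat.cast_sum, Nat.cast_ite,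
    Nat.cast_one, Nat.cast_zero, mul_sum, mul_ite, mul_one, mul_zero, sum_filter]
  exact sum_comm

theorem Nat.squarefree_iff_floorRoot_two_eq_one {n : ℕ} : Squarefree n ↔ floorRoot 2 n = 1 := by
  simp only [Squarefree, Nat.isUnit_iff, ← sq, Nat.pow_dvd_iff_dvd_floorRoot]
  exact ⟨fun h => h _ dvd_rfl, fun h d hd => Nat.dvd_one.1 (h ▸ hd)⟩

theorem sum_divisors_moebius (n : ℕ) : ∑ d ∈ n.divisors, μ d = if n = 1 then 1 else 0 := by
  rw [← coe_mul_zeta_apply, moebius_mul_coe_zeta, one_apply]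

theorem sum_moebius_mul_div_eq_one {m K : ℕ} (hm : 1 ≤ m) (hmK : m ≤ K) :
    ∑ b ∈ Icc 1 K, μ b * (m / b : ℕ) = 1 := by
  have hdiv : ∀ n ∈ Ioc 0 m, {b ∈ Icc 1 K | b ∣ n} = n.divisors := by
    intro n hn
    rw [mem_Ioc] at hn
    ext b
    simp only [mem_filter, mem_Icc, Nat.mem_divisors]
    constructor
    · rintro ⟨-, hb⟩
      exact ⟨hb, by omega⟩
    · rintro ⟨hb, -⟩
      exact ⟨⟨Nat.pos_of_dvd_of_pos hb hn.1, (Nat.le_of_dvd hn.1 hb).trans (hn.2.trans hmK)⟩, hb⟩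
  have h := sum_mul_div_eq_sum_sum_filter_dvd (Icc 1 K) μ id m
  simp only [id] at h
  rw [h, sum_congr rfl fun n hn => by rw [hdiv n hn, sum_divisors_moebius], sum_ite_eq']
  simp [hm]

theorem sum_sum_moebius_mul_div_mul (N : ℕ) :
    ∑ a ∈ Icc 1 N.sqrt, ∑ b ∈ Icc 1 N.sqrt, μ a * μ b * (N / (a * b) : ℕ)
      = 2 * ∑ a ∈ Icc 1 N.sqrt, μ a - ∑ n ∈ Icc 1 N, μ n := by
  have hrow : ∀ a ∈ Icc 1 N, ∑ b ∈ Icc 1 N, μ a * μ b * (N / (a * b) : ℕ) = μ a := by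
    intro a ha
    rw [mem_Icc] at ha
    simp_rw [mul_assoc, ← mul_sum, ← Nat.div_div_eq_div_mul]
    rw [sum_moebius_mul_div_eq_one ((Nat.one_le_div_iff (by omega)).2 ha.2) (Nat.div_le_self N a),
      mul_one]
  have hsub : Icc 1 N.sqrt ⊆ Icc 1 N := Icc_subset_Icc_right (Nat.sqrt_le_self N)
  rw [sum_sum_eq_two_nsmul_sub_of_symm hsub (fun a b => by rw [mul_comm a b]; ring) ?_,
    sum_congr rfl fun a ha => hrow a (hsub ha), sum_congr rfl hrow, nsmul_eq_mul, Nat.cast_ofNat]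
  intro a ha b hb
  simp only [mem_sdiff, mem_Icc, not_and, not_le] at ha hb
  have hab : N < a * b :=
    (Nat.lt_succ_sqrt N).trans_le (Nat.mul_le_mul (ha.2 ha.1.1) (hb.2 hb.1.1))
  rw [Nat.div_eq_of_lt hab, Nat.cast_zero, mul_zero]

theorem sum_moebius_mul_div_sq (N : ℕ) :
    ∑ d ∈ Icc 1 N.sqrt, μ d * (N / d ^ 2 : ℕ) = #{n ∈ Icc 1 N | Squarefree n} := by
  have hdiv : ∀ n ∈ Ioc 0 N, {d ∈ Icc 1 N.sqrt | d ^ 2 ∣ n} = (Nat.floorRoot 2 n).divisors := by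
    intro n hn
    rw [mem_Ioc] at hn
    have hroot : 0 < Nat.floorRoot 2 n :=
      Nat.pos_of_ne_zero (Nat.floorRoot_ne_zero.2 ⟨two_ne_zero, hn.1.ne'⟩)
    ext d
    simp only [mem_filter, mem_Icc, Nat.mem_divisors, Nat.pow_dvd_iff_dvd_floorRoot]
    constructor
    · rintro ⟨-, hd⟩
      exact ⟨hd, hroot.ne'⟩
    · rintro ⟨hd, -⟩
      have hdn : d ^ 2 ≤ n := Nat.le_of_dvd hn.1 (Nat.pow_dvd_iff_dvd_floorRoot.2 hd)
      exact ⟨⟨Nat.pos_of_dvd_of_pos hd hroot, Nat.le_sqrt.2 (by nlinarith)⟩, hd⟩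
  rw [sum_mul_div_eq_sum_sum_filter_dvd, sum_congr rfl fun n hn => by
    rw [hdiv n hn, sum_divisors_moebius]]
  simp_rw [← Nat.squarefree_iff_floorRoot_two_eq_one]
  rw [sum_boole]
  rfl

theorem card_filter_squarefree_sub_sum_moebius (s : Finset ℕ) :
    (#{n ∈ s | Squarefree n} : ℤ) - ∑ n ∈ s, μ n = 2 * #{n ∈ s | μ n = -1} := by
  simp only [card_filter, Nat.cast_sum, mul_sum, ← sum_sub_distrib]
  refine sum_congr rfl fun n _ => ?_
  rcases moebius_eq_or n with h | h | h <;> simp [h, ← moebius_ne_zero_iff_squarefree]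

theorem Nat.floor_sqrt_eq_sqrt_floor {x : ℝ} (hx : 0 ≤ x) : ⌊√x⌋₊ = Nat.sqrt ⌊x⌋₊ :=
  eq_of_forall_le_iff fun d => by
    rw [Nat.le_floor_iff (Real.sqrt_nonneg x), Real.le_sqrt (Nat.cast_nonneg d) hx, Nat.le_sqrt,
      Nat.le_floor_iff hx, ← sq]
    norm_cast

theorem Int.floor_div_natCast_of_nonneg {K : Type*} [Field K] [LinearOrder K]
    [IsStrictOrderedRing K] [FloorRing K] {x : K} (hx : 0 ≤ x) (c : ℕ) :
    ⌊x / c⌋ = (⌊x⌋₊ / c : ℕ) := by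
  rw [← Nat.floor_div_natCast, Int.natCast_floor_eq_floor (by positivity)]

theorem stmt7 (x : ℝ) (hx : 1 ≤ x) :
    (Nminus x : ℚ) = -(Mertens (Real.sqrt x) : ℚ) +
      (1 / 2) * ∑ i ∈ Finset.Icc 1 ⌊Real.sqrt x⌋₊, ∑ j ∈ Finset.Icc 1 ⌊Real.sqrt x⌋₊,
        (moebius i * moebius j * ⌊x / (i * j : ℝ)⌋ : ℚ) +
      (1 / 2) * ∑ i ∈ Finset.Icc 1 ⌊Real.sqrt x⌋₊, (moebius i * ⌊x / (i ^ 2 : ℝ)⌋ : ℚ) := by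
  have hx0 : 0 ≤ x := zero_le_one.trans hx
  have hdouble := congrArg (Int.cast : ℤ → ℚ) (sum_sum_moebius_mul_div_mul ⌊x⌋₊)
  have hsquarefree := congrArg (Int.cast : ℤ → ℚ) (sum_moebius_mul_div_sq ⌊x⌋₊)
  have hcount := congrArg (Int.cast : ℤ → ℚ) (card_filter_squarefree_sub_sum_moebius (Icc 1 ⌊x⌋₊))
  simp_rw [← Nat.cast_mul, ← Nat.cast_pow, Int.floor_div_natCast_of_nonneg hx0]
  rw [Nminus, Mertens, Nat.floor_sqrt_eq_sqrt_floor hx0]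
  simp only [Int.cast_sum, Int.cast_mul, Int.cast_sub, Int.cast_ofNat, Int.cast_natCast]
    at hdouble hsquarefree hcount ⊢
  linear_combination (-1 / 2 : ℚ) * (hdouble + hsquarefree + hcount)
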